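/- Let G be a simple graph with n vertices, m edges and degree sequence (d_1, …, d_n), and write its Laplacian permanental polynomial as π(L(G); x) = Σ_i p_i(G) x^{n−i}. Then: (i) p_0(G) = 1; (ii) p_1(G) = −2m; (iii) p_2(G) = 2m² + m − (1/2) Σ_i d_i²; and (iv) p_3(G) = −(1/3) Σ_i d_i³ + (m+1) Σ_i d_i² − (4/3)m³ − 2m² + 2c₃(G), where c₃(G) is the number of triangles in G. -/

import Mathlib

open scoped Classical
open Polynomial

noncomputable section

/-- The Laplacian permanental polynomial `per(x·I − L(G))` of a graph `G`,
where `L(G) = D(G) − A(G)` is the Laplacian matrix. -/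
def lapPermPoly {V : Type*} [Fintype V] (G : SimpleGraph V) : Polynomial ℚ :=
  Matrix.permanent
    (Matrix.diagonal (fun _ : V => (X : Polynomial ℚ)) - (G.lapMatrix ℚ).map Polynomial.C)

/-- The number of triangles (3-cycles) of `G`, i.e. the number of 3-cliques. -/
def triangleCount {V : Type*} [Fintype V] (G : SimpleGraph V) : ℕ :=
  (G.cliqueFinset 3).card

/-!
In the expansion of `per(x·I − L(G))`, a permutation `σ` contributes
`∏_{σ i ≠ i} a_{σ i, i} · ∏_{σ i = i} (x − dᵢ)`, so only permutations moving at most `k`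
vertices reach `x^{n-k}`. When `σ` moves at most three vertices, of any two moved vertices `σ`
maps one to the other, so the weight of `σ` is `1` if the moved vertices form a clique and `0`
otherwise; and exactly `D_j` permutations (the derangement number: `D₀ = 1, D₁ = 0, D₂ = 1,
D₃ = 2`) move a given `j`-set. Hence for `k ≤ 3`, `p_k` is a
sum over the `j`-cliques, `j ≤ k`, of elementary symmetric functions of the degrees outside the
clique, which Newton's identities turn into the power sums `∑ dᵢ^r`.
-/

open Finset

namespace Polynomial

variable {R ι : Type*} [CommRing R]

theorem natDegree_prod_X_sub_C_le (s : Finset ι) (f : ι → R) :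
    (∏ i ∈ s, (X - C (f i))).natDegree ≤ #s :=
  (natDegree_prod_le _ _).trans <| by
    simpa using Finset.sum_le_sum fun i (_ : i ∈ s) => natDegree_X_sub_C_le (f i)

theorem reflect_prod_X_sub_C (s : Finset ι) (f : ι → R) :
    reflect #s (∏ i ∈ s, (X - C (f i))) = ∏ i ∈ s, (1 - C (f i) * X) := by
  induction s using Finset.cons_induction with
  | empty => simp
  | cons a s ha ih =>
    rw [prod_cons, prod_cons, card_cons, add_comm,
      reflect_mul _ _ (natDegree_X_sub_C_le _) (natDegree_prod_X_sub_C_le s f), ih,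
      reflect_sub, reflect_one_X, reflect_C, pow_one]

theorem coeff_prod_X_sub_C_card_sub (s : Finset ι) (f : ι → R) {k : ℕ} (hk : k ≤ #s) :
    (∏ i ∈ s, (X - C (f i))).coeff (#s - k) = (∏ i ∈ s, (1 - C (f i) * X)).coeff k := by
  rw [← reflect_prod_X_sub_C, coeff_reflect, revAt_le hk]

theorem coeff_C_mul_prod_compl_X_sub_C [Fintype ι] (s : Finset ι) (c : R) (f : ι → R) {k : ℕ}
    (hk : k ≤ Fintype.card ι) :
    (C c * ∏ i ∈ sᶜ, (X - C (f i))).coeff (Fintype.card ι - k) =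
      if #s ≤ k then c * (∏ i ∈ sᶜ, (1 - C (f i) * X)).coeff (k - #s) else 0 := by
  have hcompl : #sᶜ = Fintype.card ι - #s := card_compl s
  rw [coeff_C_mul]
  split_ifs with hs
  · rw [show Fintype.card ι - k = #sᶜ - (k - #s) by omega,
      coeff_prod_X_sub_C_card_sub _ _ (by omega)]
  · rw [coeff_eq_zero_of_natDegree_lt, mul_zero]
    have := natDegree_prod_X_sub_C_le sᶜ f
    have := card_le_univ s
    omega

theorem coeff_one_sub_C_mul_X_mul_succ (r : R) (p : R[X]) (k : ℕ) :
    ((1 - C r * X) * p).coeff (k + 1) = p.coeff (k + 1) - r * p.coeff k := by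
  rw [sub_mul, one_mul, coeff_sub, mul_assoc, coeff_C_mul, coeff_X_mul]

theorem coeff_prod_one_sub_C_mul_X (s : Finset ι) (f : ι → R) :
    (∏ i ∈ s, (1 - C (f i) * X)).coeff 0 = 1 ∧
    (∏ i ∈ s, (1 - C (f i) * X)).coeff 1 = -∑ i ∈ s, f i ∧
    2 * (∏ i ∈ s, (1 - C (f i) * X)).coeff 2 = (∑ i ∈ s, f i) ^ 2 - ∑ i ∈ s, f i ^ 2 ∧
    6 * (∏ i ∈ s, (1 - C (f i) * X)).coeff 3 =
      -((∑ i ∈ s, f i) ^ 3 - 3 * (∑ i ∈ s, f i) * ∑ i ∈ s, f i ^ 2 + 2 * ∑ i ∈ s, f i ^ 3) := by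
  induction s using Finset.cons_induction with
  | empty => simp [coeff_one]
  | cons a s ha ih =>
    obtain ⟨h0, h1, h2, h3⟩ := ih
    simp only [prod_cons, sum_cons, coeff_one_sub_C_mul_X_mul_succ, mul_coeff_zero, h0]
    refine ⟨by simp, ?_, ?_, ?_⟩
    · simp only [zero_add, h1]; ring
    · linear_combination h2 - 2 * f a * h1
    · linear_combination h3 - 3 * f a * h2

end Polynomial

namespace Matrix

variable {R V : Type*} [CommRing R] [Fintype V]

theorem permanent_diagonal_X_sub_map_C (M : Matrix V V R) :
    permanent (diagonal (fun _ => (X : R[X])) - M.map C) =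
      ∑ σ : Equiv.Perm V,
        C (∏ i ∈ σ.support, -M (σ i) i) * ∏ i ∈ σ.supportᶜ, (X - C (M i i)) := by
  refine sum_congr rfl fun σ _ => ?_
  rw [← prod_mul_prod_compl σ.support, map_prod]
  congr 1
  · refine prod_congr rfl fun i hi => ?_
    simp [diagonal_apply_ne _ (Equiv.Perm.mem_support.mp hi)]
  · refine prod_congr rfl fun i hi => ?_
    simp [Equiv.Perm.notMem_support.mp (mem_compl.mp hi)]

theorem coeff_permanent_diagonal_X_sub_map_C (M : Matrix V V R) {k : ℕ}
    (hk : k ≤ Fintype.card V) :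
    (permanent (diagonal (fun _ => (X : R[X])) - M.map C)).coeff (Fintype.card V - k) =
      ∑ σ : Equiv.Perm V, if #σ.support ≤ k then
        (∏ i ∈ σ.support, -M (σ i) i) *
          (∏ i ∈ σ.supportᶜ, (1 - C (M i i) * X)).coeff (k - #σ.support) else 0 := by
  simp only [permanent_diagonal_X_sub_map_C, finsetSum_coeff,
    coeff_C_mul_prod_compl_X_sub_C _ _ _ hk]

end Matrix

namespace Equiv.Perm

variable {α : Type*} [Fintype α]

theorem apply_eq_or_apply_eq_of_card_support_le_three {σ : Perm α} (hσ : #σ.support ≤ 3)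
    {u v : α} (hu : u ∈ σ.support) (hv : v ∈ σ.support) (huv : u ≠ v) : σ u = v ∨ σ v = u := by
  by_contra! h
  have hσu := mem_support.mp hu
  have hσv := mem_support.mp hv
  have hsub : {u, v, σ u, σ v} ⊆ σ.support := by
    simp [insert_subset_iff, hu, hv, hσu, hσv]
  have hcard : #{u, v, σ u, σ v} = 4 := by
    have hne : σ u ≠ σ v := σ.injective.ne huv
    rw [card_insert_of_notMem, card_insert_of_notMem, card_pair hne] <;> grind
  have := card_le_card hsub
  omega

theorem card_filter_support_eq (s : Finset α) :
    #{σ : Perm α | σ.support = s} = numDerangements #s := by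
  rw [← Fintype.card_subtype, ← Fintype.card_coe s, ← card_derangements_eq_numDerangements]
  refine Fintype.card_congr ((Equiv.subtypeEquivRight fun σ => ?_).trans
    (derangements.subtypeEquiv (· ∈ s)).symm)
  simp [Finset.ext_iff, mem_support, Function.IsFixedPt, not_iff_comm]

theorem sum_comp_support {M : Type*} [AddCommMonoid M] (F : Finset α → M) :
    ∑ σ : Perm α, F σ.support = ∑ s : Finset α, numDerangements #s • F s := by
  rw [← sum_fiberwise univ support]
  refine sum_congr rfl fun s _ => ?_
  rw [← card_filter_support_eq, ← sum_const]
  exact sum_congr rfl fun σ hσ => by rw [(mem_filter.mp hσ).2]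

end Equiv.Perm

namespace SimpleGraph

variable {V : Type*} [Fintype V] (G : SimpleGraph V)

theorem lapMatrix_apply_self {R : Type*} [AddGroupWithOne R] (i : V) :
    G.lapMatrix R i i = G.degree i := by
  simp [lapMatrix, degMatrix]

theorem neg_lapMatrix_apply_of_ne {R : Type*} [AddGroupWithOne R] {i j : V} (h : i ≠ j) :
    -G.lapMatrix R i j = G.adjMatrix R i j := by
  simp [lapMatrix, degMatrix, h]

theorem sum_degrees_cast_eq_twice_card_edges {R : Type*} [Semiring R] :
    ∑ v, (G.degree v : R) = 2 * #G.edgeFinset := by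
  rw [← Nat.cast_sum, G.sum_degrees_eq_twice_card_edges, Nat.cast_mul, Nat.cast_ofNat]

theorem prod_adjMatrix_apply_eq_ite {R : Type*} [CommMonoidWithZero R] {σ : Equiv.Perm V}
    (hσ : #σ.support ≤ 3) :
    ∏ i ∈ σ.support, G.adjMatrix R (σ i) i =
      if G.IsClique (σ.support : Set V) then 1 else 0 := by
  split_ifs with hclique
  · refine prod_eq_one fun i hi => ?_
    rw [adjMatrix_apply, if_pos (hclique (by simpa using hi) (by simpa using hi)
      (Equiv.Perm.mem_support.mp hi))]
  · obtain ⟨u, hu, v, hv, huv, hadj⟩ : ∃ u ∈ σ.support, ∃ v ∈ σ.support, u ≠ v ∧ ¬G.Adj u v := by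
      simpa [IsClique, Set.Pairwise] using hclique
    rcases Equiv.Perm.apply_eq_or_apply_eq_of_card_support_le_three hσ hu hv huv with h | h
    · exact prod_eq_zero hu (by rw [h, adjMatrix_apply, if_neg (fun h' => hadj h'.symm)])
    · exact prod_eq_zero hv (by rw [h, adjMatrix_apply, if_neg hadj])

theorem cliqueFinset_zero : G.cliqueFinset 0 = {∅} := by
  ext s
  simp +contextual [mem_cliqueFinset_iff, isNClique_iff]

theorem pair_mem_cliqueFinset_two_iff {a b : V} : {a, b} ∈ G.cliqueFinset 2 ↔ G.Adj a b := by
  rw [mem_cliqueFinset_iff, isNClique_iff, coe_pair, isClique_pair]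
  by_cases hab : a = b
  · simp [hab]
  · simp [hab, card_pair hab]

theorem card_filter_mem_cliqueFinset_two (v : V) :
    #{s ∈ G.cliqueFinset 2 | v ∈ s} = G.degree v := by
  rw [← card_neighborFinset_eq_degree]
  symm
  refine card_bij (fun w _ => {v, w}) (fun w hw => ?_) (fun w₁ hw₁ w₂ _ h => ?_) fun s hs => ?_
  · simpa [G.pair_mem_cliqueFinset_two_iff] using hw
  · have hmem : w₁ ∈ ({v, w₂} : Finset V) := h ▸ mem_insert_of_mem (mem_singleton_self w₁)
    have hne : w₁ ≠ v := ((mem_neighborFinset G v w₁).mp hw₁).ne'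
    simpa [hne] using hmem
  · obtain ⟨hclique, hv⟩ := mem_filter.mp hs
    obtain ⟨a, b, -, rfl⟩ := card_eq_two.mp (mem_cliqueFinset_iff.mp hclique).card_eq
    rw [G.pair_mem_cliqueFinset_two_iff] at hclique
    rcases mem_insert.mp hv with rfl | hvb
    · exact ⟨b, (mem_neighborFinset G v b).mpr hclique, rfl⟩
    · rw [mem_singleton.mp hvb]
      exact ⟨a, (mem_neighborFinset G b a).mpr hclique.symm, pair_comm b a⟩

theorem sum_cliqueFinset_two_sum {M : Type*} [AddCommMonoid M] (f : V → M) :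
    ∑ s ∈ G.cliqueFinset 2, ∑ v ∈ s, f v = ∑ v, G.degree v • f v := by
  calc
    _ = ∑ s ∈ G.cliqueFinset 2, ∑ v, if v ∈ s then f v else 0 :=
      sum_congr rfl fun s _ => by rw [sum_ite_mem, univ_inter]
    _ = ∑ v, ∑ s ∈ G.cliqueFinset 2 with v ∈ s, f v := by
      rw [sum_comm]; simp only [sum_filter]
    _ = _ := by simp only [sum_const, card_filter_mem_cliqueFinset_two]

theorem card_cliqueFinset_two : #(G.cliqueFinset 2) = #G.edgeFinset := by
  have h := G.sum_cliqueFinset_two_sum fun _ => 1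
  simp only [sum_const, smul_eq_mul, mul_one, sum_degrees_eq_twice_card_edges] at h
  rw [sum_congr rfl fun s hs => (mem_cliqueFinset_iff.mp hs).card_eq] at h
  simpa [mul_comm] using h

theorem sum_ite_card_le_isClique {M : Type*} [AddCommMonoid M] (k : ℕ) (g : Finset V → M) :
    ∑ s : Finset V, (if #s ≤ k ∧ G.IsClique (s : Set V) then g s else 0) =
      ∑ j ∈ range (k + 1), ∑ s ∈ G.cliqueFinset j, g s := by
  rw [← sum_filter, ← sum_fiberwise_of_maps_to (g := card) (t := range (k + 1))
    (by simp +contextual)]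
  refine sum_congr rfl fun j hj => sum_congr ?_ fun _ _ => rfl
  ext s
  simp only [mem_filter, mem_univ, true_and, mem_cliqueFinset_iff, isNClique_iff]
  have := mem_range.mp hj
  constructor
  · rintro ⟨⟨_, h⟩, rfl⟩; exact ⟨h, rfl⟩
  · rintro ⟨h, rfl⟩; exact ⟨⟨by omega, h⟩, rfl⟩

theorem coeff_lapPermPoly_eq_sum_cliqueFinset {k : ℕ} (hk3 : k ≤ 3) (hk : k ≤ Fintype.card V) :
    (lapPermPoly G).coeff (Fintype.card V - k) =
      ∑ j ∈ range (k + 1), (numDerangements j : ℚ) *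
        ∑ s ∈ G.cliqueFinset j, (∏ i ∈ sᶜ, (1 - C (G.degree i : ℚ) * X)).coeff (k - j) := by
  rw [lapPermPoly, Matrix.coeff_permanent_diagonal_X_sub_map_C _ hk]
  calc
    _ = ∑ σ : Equiv.Perm V, if #σ.support ≤ k ∧ G.IsClique (σ.support : Set V) then
          (∏ i ∈ σ.supportᶜ, (1 - C (G.degree i : ℚ) * X)).coeff (k - #σ.support) else 0 := by
      refine sum_congr rfl fun σ _ => ?_
      by_cases hs : #σ.support ≤ k
      · rw [prod_congr rfl fun i hi => G.neg_lapMatrix_apply_of_ne (Equiv.Perm.mem_support.mp hi),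
          G.prod_adjMatrix_apply_eq_ite (hs.trans hk3)]
        simp only [lapMatrix_apply_self, hs, true_and]
        split_ifs <;> simp
      · simp [hs]
    _ = ∑ s : Finset V, if #s ≤ k ∧ G.IsClique (s : Set V) then (numDerangements #s : ℚ) *
          (∏ i ∈ sᶜ, (1 - C (G.degree i : ℚ) * X)).coeff (k - #s) else 0 := by
      refine (Equiv.Perm.sum_comp_support (fun s => if #s ≤ k ∧ G.IsClique (s : Set V) then
        (∏ i ∈ sᶜ, (1 - C (G.degree i : ℚ) * X)).coeff (k - #s) else 0)).trans ?_
      simp only [nsmul_eq_mul, mul_ite, mul_zero]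
    _ = _ := by
      rw [sum_ite_card_le_isClique]
      refine sum_congr rfl fun j _ => ?_
      rw [mul_sum]
      exact sum_congr rfl fun s hs => by rw [(mem_cliqueFinset_iff.mp hs).card_eq]

theorem coeff_lapPermPoly_card : (lapPermPoly G).coeff (Fintype.card V) = 1 := by
  have h := G.coeff_lapPermPoly_eq_sum_cliqueFinset (k := 0) (by norm_num) (Nat.zero_le _)
  simp only [zero_add, sum_range_one, numDerangements_zero, cliqueFinset_zero, sum_singleton,
    (coeff_prod_one_sub_C_mul_X _ _).1] at h
  simpa using h

theorem coeff_lapPermPoly_card_sub_one (hn : 1 ≤ Fintype.card V) :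
    (lapPermPoly G).coeff (Fintype.card V - 1) = -2 * #G.edgeFinset := by
  have h := G.coeff_lapPermPoly_eq_sum_cliqueFinset (k := 1) (by norm_num) hn
  simp only [sum_range_succ, sum_range_zero, numDerangements_zero, numDerangements_one,
    cliqueFinset_zero, sum_singleton, compl_empty, (coeff_prod_one_sub_C_mul_X _ _).2.1,
    sum_degrees_cast_eq_twice_card_edges] at h
  simpa using h

theorem coeff_lapPermPoly_card_sub_two (hn : 2 ≤ Fintype.card V) :
    (lapPermPoly G).coeff (Fintype.card V - 2) =
      2 * (#G.edgeFinset : ℚ) ^ 2 + #G.edgeFinset - (1 / 2) * ∑ v, (G.degree v : ℚ) ^ 2 := by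
  have h := G.coeff_lapPermPoly_eq_sum_cliqueFinset (k := 2) (by norm_num) hn
  have h2 := (coeff_prod_one_sub_C_mul_X (univ : Finset V) fun v => (G.degree v : ℚ)).2.2.1
  simp only [sum_range_succ, sum_range_zero, numDerangements_zero, numDerangements_one,
    show numDerangements 2 = 1 by decide, cliqueFinset_zero, sum_singleton, compl_empty,
    (coeff_prod_one_sub_C_mul_X _ _).1, sum_const, card_cliqueFinset_two, Nat.reduceSub,
    Nat.cast_one, Nat.cast_zero, zero_add, one_mul, zero_mul, add_zero, nsmul_eq_mul, mul_one] at h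
  rw [sum_degrees_cast_eq_twice_card_edges] at h2
  linear_combination h + h2 / 2

theorem coeff_lapPermPoly_card_sub_three (hn : 3 ≤ Fintype.card V) :
    (lapPermPoly G).coeff (Fintype.card V - 3) =
      -(1 / 3) * ∑ v, (G.degree v : ℚ) ^ 3 + (#G.edgeFinset + 1) * ∑ v, (G.degree v : ℚ) ^ 2
        - (4 / 3) * (#G.edgeFinset : ℚ) ^ 3 - 2 * (#G.edgeFinset : ℚ) ^ 2
        + 2 * #(G.cliqueFinset 3) := by
  have h := G.coeff_lapPermPoly_eq_sum_cliqueFinset (k := 3) le_rfl hn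
  have h3 := (coeff_prod_one_sub_C_mul_X (univ : Finset V) fun v => (G.degree v : ℚ)).2.2.2
  have hedges : ∑ s ∈ G.cliqueFinset 2, (∏ i ∈ sᶜ, (1 - C (G.degree i : ℚ) * X)).coeff 1 =
      ∑ v, (G.degree v : ℚ) ^ 2 - 2 * (#G.edgeFinset : ℚ) ^ 2 := by
    have hcompl (s : Finset V) :
        ∑ i ∈ sᶜ, (G.degree i : ℚ) = 2 * #G.edgeFinset - ∑ i ∈ s, (G.degree i : ℚ) := by
      rw [← sum_degrees_cast_eq_twice_card_edges, ← sum_compl_add_sum s, add_sub_cancel_right]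
    simp only [(coeff_prod_one_sub_C_mul_X _ _).2.1, hcompl, neg_sub, sum_sub_distrib,
      sum_cliqueFinset_two_sum, sum_const, card_cliqueFinset_two, nsmul_eq_mul, sq]
    ring
  simp only [sum_range_succ, sum_range_zero, numDerangements_zero, numDerangements_one,
    show numDerangements 2 = 1 by decide, show numDerangements 3 = 2 by decide,
    cliqueFinset_zero, sum_singleton, compl_empty, hedges,
    (coeff_prod_one_sub_C_mul_X _ _).1, sum_const, Nat.reduceSub,
    Nat.cast_one, Nat.cast_zero, zero_add, one_mul, zero_mul, add_zero, nsmul_eq_mul, mul_one] at h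
  rw [sum_degrees_cast_eq_twice_card_edges] at h3
  linear_combination h + h3 / 6

end SimpleGraph

/-- **Lemma 2.1.** The four leading coefficients of the Laplacian permanental
polynomial `π = ∑ᵢ pᵢ xⁿ⁻ⁱ` of a graph `G` with `n` vertices, `m` edges and degrees `dᵢ`:
`p₀ = 1`, `p₁ = −2m`, `p₂ = 2m² + m − (1/2)∑dᵢ²`, and
`p₃ = −(1/3)∑dᵢ³ + (m+1)∑dᵢ² − (4/3)m³ − 2m² + 2c₃(G)`. -/
theorem lapPermPoly_coeffs
    {V : Type*} [Fintype V] (G : SimpleGraph V) :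
    (lapPermPoly G).coeff (Fintype.card V) = 1 ∧
    (1 ≤ Fintype.card V →
      (lapPermPoly G).coeff (Fintype.card V - 1) = -2 * (G.edgeFinset.card : ℚ)) ∧
    (2 ≤ Fintype.card V →
      (lapPermPoly G).coeff (Fintype.card V - 2) =
        2 * (G.edgeFinset.card : ℚ) ^ 2 + (G.edgeFinset.card : ℚ)
          - (1/2) * ∑ v, (G.degree v : ℚ) ^ 2) ∧
    (3 ≤ Fintype.card V →
      (lapPermPoly G).coeff (Fintype.card V - 3) =
        -(1/3) * ∑ v, (G.degree v : ℚ) ^ 3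
          + ((G.edgeFinset.card : ℚ) + 1) * ∑ v, (G.degree v : ℚ) ^ 2
          - (4/3) * (G.edgeFinset.card : ℚ) ^ 3 - 2 * (G.edgeFinset.card : ℚ) ^ 2
          + 2 * (triangleCount G : ℚ)) :=
  ⟨G.coeff_lapPermPoly_card, G.coeff_lapPermPoly_card_sub_one,
    G.coeff_lapPermPoly_card_sub_two, G.coeff_lapPermPoly_card_sub_three⟩
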